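/- Let A be an associative unital κ-algebra with center Z and let (B_i)_{i≥0} be a formal deformation of A, with bracket {a,b} := B_1(a,b) − B_1(b,a). Then: (1) for all f, g ∈ Z, the element {f,g} lies in Z; (2) {f,g} = −{g,f} for f,g ∈ Z; (3) the Jacobi identity {{f,g},h} + {{g,h},f} + {{h,f},g} = 0 holds for all f,g,h ∈ Z; and (4) for every f ∈ Z and a,b ∈ A, {f, ab} = {f,a}b + a{f,b}. -/
import Mathlib


/-- The first-order bracket `{a,b} := B₁(a,b) − B₁(b,a)` of a formal deformation. -/
def deformationBracket {κ : Type*} [Field κ] {A : Type*} [Ring A] [Algebra κ A]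
    (B : ℕ → A →ₗ[κ] A →ₗ[κ] A) (a b : A) : A :=
  B 1 a b - B 1 b a

/-- Let `A` be an associative unital κ-algebra with center `Z` and
`(B_i)` a formal deformation of `A`, with bracket `{a,b} := B₁(a,b) − B₁(b,a)`.
Then: (1) `{f,g} ∈ Z` for `f, g ∈ Z`; (2) `{f,g} = −{g,f}`; (3) the Jacobi identity
holds on `Z`; (4) `{f, ab} = {f,a}b + a{f,b}` for `f ∈ Z`, `a, b ∈ A`. -/
theorem deformation_bracket_poisson_fibred
    (κ : Type*) [Field κ] [CharZero κ]
    (A : Type*) [Ring A] [Algebra κ A]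
    (B : ℕ → A →ₗ[κ] A →ₗ[κ] A)
    (hB0 : ∀ a b : A, B 0 a b = a * b)
    (hassoc : ∀ (n : ℕ) (a b c : A),
      ∑ i ∈ Finset.range (n + 1), B i (B (n - i) a b) c
        = ∑ i ∈ Finset.range (n + 1), B i a (B (n - i) b c)) :
    (∀ f g : A, f ∈ Subalgebra.center κ A → g ∈ Subalgebra.center κ A →
      deformationBracket B f g ∈ Subalgebra.center κ A) ∧
    (∀ f g : A, f ∈ Subalgebra.center κ A → g ∈ Subalgebra.center κ A →
      deformationBracket B f g = - deformationBracket B g f) ∧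
    (∀ f g h : A, f ∈ Subalgebra.center κ A → g ∈ Subalgebra.center κ A →
      h ∈ Subalgebra.center κ A →
      deformationBracket B (deformationBracket B f g) h
        + deformationBracket B (deformationBracket B g h) f
        + deformationBracket B (deformationBracket B h f) g = 0) ∧
    (∀ f : A, f ∈ Subalgebra.center κ A → ∀ a b : A,
      deformationBracket B f (a * b)
        = deformationBracket B f a * b + a * deformationBracket B f b) := by
  -- The Hochschild 2-cocycle identity for B₁ (order-1 associativity)
  have hc : ∀ a b c : A, B 1 a b * c + B 1 (a * b) c = a * B 1 b c + B 1 a (b * c) := by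
    intro a b c
    have h := hassoc 1 a b c
    simp only [Finset.sum_range_succ, Finset.sum_range_zero, zero_add, Nat.sub_zero,
      Nat.sub_self, hB0] at h
    linear_combination (norm := noncomm_ring) h
  -- The order-2 associativity identity
  have hc2 : ∀ a b c : A, B 2 a b * c + B 1 (B 1 a b) c + B 2 (a * b) c
      = a * B 2 b c + B 1 a (B 1 b c) + B 2 a (b * c) := by
    intro a b c
    have h := hassoc 2 a b c
    simp only [Finset.sum_range_succ, Finset.sum_range_zero, zero_add, Nat.sub_zero,
      Nat.sub_self, hB0] at h
    norm_num at h
    linear_combination (norm := noncomm_ring) h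
  refine ⟨?_, ?_, ?_, ?_⟩
  · -- (1) centrality of the bracket
    intro f g hf hg
    have hf' := Subalgebra.mem_center_iff.mp hf
    have hg' := Subalgebra.mem_center_iff.mp hg
    rw [Subalgebra.mem_center_iff]
    intro a
    simp only [deformationBracket]
    have H1 := hc f g a
    have H2 := hc f a g
    have H3 := hc g f a
    have H4 := hc g a f
    have H5 := hc a f g
    have H6 := hc a g f
    simp only [hf' g, hf' a, hg' a] at H1 H2 H3 H4 H5 H6
    linear_combination (norm := noncomm_ring)
      -H1 + H2 + H3 - H4 - H5 + H6
        + hf' (B 1 g a) - hf' (B 1 a g) - hg' (B 1 f a) + hg' (B 1 a f)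
  · -- (2) antisymmetry
    intro f g _ _
    simp only [deformationBracket]
    abel
  · -- (3) Jacobi identity
    intro f g h hf hg hh
    have hf' := Subalgebra.mem_center_iff.mp hf
    have hg' := Subalgebra.mem_center_iff.mp hg
    have hh' := Subalgebra.mem_center_iff.mp hh
    simp only [deformationBracket, map_sub, LinearMap.sub_apply]
    have H1 := hc2 f g h
    have H2 := hc2 f h g
    have H3 := hc2 g f h
    have H4 := hc2 g h f
    have H5 := hc2 h f g
    have H6 := hc2 h g f
    simp only [hf' g, hf' h, hg' h] at H1 H2 H3 H4 H5 H6
    linear_combination (norm := noncomm_ring)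
      H1 - H2 - H3 + H4 + H5 - H6
        - hh' (B 2 f g) + hg' (B 2 f h) + hh' (B 2 g f)
        - hf' (B 2 g h) - hg' (B 2 h f) + hf' (B 2 h g)
  · -- (4) Leibniz rule
    intro f hf a b
    have hf' := Subalgebra.mem_center_iff.mp hf
    simp only [deformationBracket]
    have H1 := hc f a b
    have H2 := hc a f b
    have H3 := hc a b f
    simp only [hf' a, hf' b] at H1 H2 H3
    linear_combination (norm := noncomm_ring)
      -H1 + H2 - H3 + hf' (B 1 a b)
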